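/- Let C ⊆ ℝⁿ be a nonempty compact convex set and K = {(α, αx) : α ≥ 0, x ∈ C}. If F is a face of K with F ≠ {0}, then F_C = {x ∈ C : (1,x) ∈ F} is a face of C, and dim F_C = dim F − 1. -/

import Mathlib

/-!
A face `F` of the cone `K = {(α, α x) : α ≥ 0, x ∈ C}` is itself closed under nonnegative
scaling: for `p ∈ F` and `t > 1`, `p` lies strictly between `0` and `t p`, both in `K`, so both
lie in `F`, and convexity takes care of `t ≤ 1`.
Hence every nonzero point of `F` lies on the ray through some `(1, x)` with `x ∈ F_C`, and the
vector span of `F` is the linear span of `{1} × F_C`. For a point `(1, x₀)` of that set, this span splits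
as the line through `(1, x₀)` plus `{0} × vectorSpan F_C`, which gives `dim F = dim F_C + 1`.
-/

/-- The dimension of a set: the linear dimension of its affine hull. -/
noncomputable def setDim {E : Type*} [AddCommGroup E] [Module ℝ E] (S : Set E) : ℕ :=
  Module.finrank ℝ (vectorSpan ℝ S)

/-- `F` is a face of the convex set `S`: a convex subset such that whenever a point of the
open segment between `x, y ∈ S` lies in `F`, both endpoints lie in `F`. -/
def IsFaceOf {E : Type*} [AddCommGroup E] [Module ℝ E] (S F : Set E) : Prop :=
  F ⊆ S ∧ Convex ℝ F ∧ ∀ ⦃x⦄, x ∈ S → ∀ ⦃y⦄, y ∈ S → ∀ ⦃a : ℝ⦄, 0 < a → a < 1 →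
    a • x + (1 - a) • y ∈ F → x ∈ F ∧ y ∈ F

/-- An extreme ray of `K` is a one-dimensional face. -/
def IsExtremeRay {E : Type*} [AddCommGroup E] [Module ℝ E] (K R : Set E) : Prop :=
  IsFaceOf K R ∧ setDim R = 1

/-- `x` is a sum of at most `k` elements, each belonging to an extreme ray of `K`. -/
def IsSumOfExtremeRayElems {E : Type*} [AddCommGroup E] [Module ℝ E]
    (K : Set E) (k : ℕ) (x : E) : Prop :=
  ∃ m : ℕ, m ≤ k ∧ ∃ f : Fin m → E,
    (∀ i, ∃ R : Set E, IsExtremeRay K R ∧ f i ∈ R) ∧ x = ∑ i, f i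

/-- There is a chain of `l` nonempty faces of `S`, each properly containing the next. -/
def HasFaceChainOfLength {E : Type*} [AddCommGroup E] [Module ℝ E] (S : Set E) (l : ℕ) : Prop :=
  ∃ c : Fin l → Set E, StrictAnti c ∧ ∀ i, IsFaceOf S (c i) ∧ (c i).Nonempty

/-- `l` is the length of the longest chain of nonempty faces of `S`. -/
def IsLongestFaceChainLength {E : Type*} [AddCommGroup E] [Module ℝ E] (S : Set E) (l : ℕ) : Prop :=
  HasFaceChainOfLength S l ∧ ∀ m, HasFaceChainOfLength S m → m ≤ l

section Span

variable {k V : Type*} [Ring k] [AddCommGroup V] [Module k V]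

theorem vectorSpan_eq_span_of_zero_mem {s : Set V} (h0 : (0 : V) ∈ s) :
    vectorSpan k s = Submodule.span k s := by
  simp [vectorSpan_eq_span_vsub_set_right k h0]

theorem span_eq_vectorSpan_sup_span_singleton {s : Set V} {p : V} (hp : p ∈ s) :
    Submodule.span k s = vectorSpan k s ⊔ k ∙ p := by
  refine le_antisymm (Submodule.span_le.2 fun x hx => ?_) (sup_le ?_ ?_)
  · rw [← sub_add_cancel x p]
    exact Submodule.add_mem_sup (vsub_mem_vectorSpan k hx hp) (Submodule.mem_span_singleton_self p)
  · rw [vectorSpan_def, Submodule.span_le]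
    rintro _ ⟨a, ha, b, hb, rfl⟩
    exact sub_mem (Submodule.subset_span ha) (Submodule.subset_span hb)
  · exact (Submodule.span_singleton_le_iff_mem _ _).2 (Submodule.subset_span hp)

end Span

open scoped Pointwise in
theorem finrank_vectorSpan_eq_finrank_span_image_sub_one {k E : Type*} [DivisionRing k]
    [AddCommGroup E] [Module k E] [FiniteDimensional k E] (D : Set E) :
    Module.finrank k (vectorSpan k D) =
      Module.finrank k (Submodule.span k ((fun x => ((1 : k), x)) '' D)) - 1 := by
  rcases D.eq_empty_or_nonempty with rfl | ⟨x₀, hx₀⟩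
  · -- both sides are `0`, the right one as the truncated `0 - 1`
    rw [Set.image_empty, Submodule.span_empty]
    simp
  have himage : (fun x => ((1 : k), x)) '' D = ((1 : k), (0 : E)) +ᵥ LinearMap.inr k k E '' D := by
    ext; simp [Set.mem_vadd_set, Prod.ext_iff, eq_comm]
  have hvectorSpan : vectorSpan k ((fun x => ((1 : k), x)) '' D) =
      (vectorSpan k D).map (LinearMap.inr k k E) := by
    rw [himage, vectorSpan_vadd]
    exact (LinearMap.inr k k E).toAffineMap.map_vectorSpan.symm
  have hnotMem : ((1 : k), x₀) ∉ (vectorSpan k D).map (LinearMap.inr k k E) := by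
    rintro ⟨v, -, hv⟩
    simpa using congrArg Prod.fst hv
  rw [span_eq_vectorSpan_sup_span_singleton (Set.mem_image_of_mem _ hx₀), hvectorSpan,
    Submodule.finrank_sup_span_singleton hnotMem,
    ← (Submodule.equivMapOfInjective _ LinearMap.inr_injective _).finrank_eq, Nat.add_sub_cancel]

section Cone

variable {E : Type*} [AddCommGroup E] [Module ℝ E] {K F : Set E}

theorem IsFaceOf.zero_mem (hK : ∀ p ∈ K, ∀ t : ℝ, 0 ≤ t → t • p ∈ K) (hF : IsFaceOf K F)
    (hne : F.Nonempty) : (0 : E) ∈ F := by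
  obtain ⟨p, hp⟩ := hne
  have hmid : (1 / 2 : ℝ) • ((2 : ℝ) • p) + (1 - 1 / 2 : ℝ) • (0 : E) ∈ F := by
    simpa [smul_smul] using hp
  have h2p := hK p (hF.1 hp) 2 zero_le_two
  have h0 := hK p (hF.1 hp) 0 le_rfl
  rw [zero_smul] at h0
  exact (hF.2.2 h2p h0 (by norm_num) (by norm_num) hmid).2

theorem IsFaceOf.smul_mem (hK : ∀ p ∈ K, ∀ t : ℝ, 0 ≤ t → t • p ∈ K) (hF : IsFaceOf K F)
    {p : E} (hp : p ∈ F) {t : ℝ} (ht : 0 ≤ t) : t • p ∈ F := by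
  have h0 := hF.zero_mem hK ⟨p, hp⟩
  rcases le_or_gt t 1 with ht1 | ht1
  · simpa using hF.2.1 hp h0 ht (sub_nonneg.2 ht1) (add_sub_cancel t 1)
  · have hmid : t⁻¹ • (t • p) + (1 - t⁻¹) • (0 : E) ∈ F := by
      simpa [smul_smul, inv_mul_cancel₀ (by positivity : t ≠ 0)] using hp
    exact (hF.2.2 (hK p (hF.1 hp) t ht) (hF.1 h0) (by positivity) (inv_lt_one_of_one_lt₀ ht1)
      hmid).1

end Cone

def homogenization {E : Type*} [AddCommGroup E] [Module ℝ E] (C : Set E) : Set (ℝ × E) :=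
  {p | ∃ α : ℝ, 0 ≤ α ∧ ∃ x ∈ C, p = (α, α • x)}

section Homogenization

variable {E : Type*} [AddCommGroup E] [Module ℝ E] {C : Set E} {F : Set (ℝ × E)}

theorem smul_mem_homogenization :
    ∀ p ∈ homogenization C, ∀ t : ℝ, 0 ≤ t → t • p ∈ homogenization C := by
  rintro _ ⟨α, hα, x, hx, rfl⟩ t ht
  exact ⟨t * α, mul_nonneg ht hα, x, hx, by simp [mul_smul]⟩

theorem one_mem_homogenization_iff {x : E} : ((1 : ℝ), x) ∈ homogenization C ↔ x ∈ C := by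
  refine ⟨fun ⟨α, _, y, hy, h⟩ => ?_, fun hx => ⟨1, zero_le_one, x, hx, by simp⟩⟩
  obtain ⟨rfl, rfl⟩ := Prod.mk.injEq _ _ _ _ ▸ h
  simpa using hy

theorem IsFaceOf.slice_of_homogenization (hF : IsFaceOf (homogenization C) F) :
    IsFaceOf C {x ∈ C | ((1 : ℝ), x) ∈ F} := by
  refine ⟨fun x hx => hx.1, fun x hx y hy a b ha hb hab => ?_, fun x hx y hy a ha ha1 hmem => ?_⟩
  · have hcomb : ((1 : ℝ), a • x + b • y) ∈ F := by
      simpa [hab] using hF.2.1 hx.2 hy.2 ha hb hab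
    exact ⟨one_mem_homogenization_iff.1 (hF.1 hcomb), hcomb⟩
  · have hxy := hF.2.2 (one_mem_homogenization_iff.2 hx) (one_mem_homogenization_iff.2 hy) ha ha1
      (by simpa using hmem.2)
    exact ⟨⟨hx, hxy.1⟩, ⟨hy, hxy.2⟩⟩

theorem IsFaceOf.vectorSpan_eq_span_image_slice (hF : IsFaceOf (homogenization C) F) :
    vectorSpan ℝ F =
      Submodule.span ℝ ((fun x => ((1 : ℝ), x)) '' {x ∈ C | ((1 : ℝ), x) ∈ F}) := by
  rcases F.eq_empty_or_nonempty with rfl | hne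
  · simp
  rw [vectorSpan_eq_span_of_zero_mem (hF.zero_mem smul_mem_homogenization hne)]
  refine le_antisymm (Submodule.span_le.2 fun p hp => ?_)
    (Submodule.span_mono (Set.image_subset_iff.2 fun x hx => hx.2))
  obtain ⟨α, hα, x, hx, rfl⟩ := hF.1 hp
  rcases hα.eq_or_lt with rfl | hα
  · rw [zero_smul]
    exact Submodule.zero_mem _
  have hxF : ((1 : ℝ), x) ∈ F := by
    simpa [smul_smul, inv_mul_cancel₀ hα.ne'] using
      hF.smul_mem smul_mem_homogenization hp (inv_nonneg.2 hα.le)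
  have hmem : ((1 : ℝ), x) ∈ (fun x => ((1 : ℝ), x)) '' {x ∈ C | ((1 : ℝ), x) ∈ F} :=
    ⟨x, ⟨hx, hxF⟩, rfl⟩
  simpa using Submodule.smul_mem _ α (Submodule.subset_span hmem)

end Homogenization

theorem caratheodory_stmt9_general {n : ℕ} (C : Set (EuclideanSpace ℝ (Fin n)))
    (K : Set (ℝ × EuclideanSpace ℝ (Fin n)))
    (hK : K = {p | ∃ α : ℝ, 0 ≤ α ∧ ∃ x ∈ C, p = (α, α • x)})
    (F : Set (ℝ × EuclideanSpace ℝ (Fin n)))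
    (hF : IsFaceOf K F) :
    IsFaceOf C {x ∈ C | (1, x) ∈ F} ∧ setDim {x ∈ C | (1, x) ∈ F} = setDim F - 1 := by
  change K = homogenization C at hK
  subst hK
  refine ⟨hF.slice_of_homogenization, ?_⟩
  rw [setDim, setDim, hF.vectorSpan_eq_span_image_slice]
  exact finrank_vectorSpan_eq_finrank_span_image_sub_one _

/-- Let `C` be a nonempty compact convex set and
`K = {(α, α x) : α ≥ 0, x ∈ C}`. If `F` is a face of `K` with `F ≠ {0}`, then
`F_C = {x ∈ C : (1, x) ∈ F}` is a face of `C` with `dim F_C = dim F − 1`. -/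
theorem caratheodory_stmt9 {n : ℕ} (C : Set (EuclideanSpace ℝ (Fin n)))
    (hCne : C.Nonempty) (hCcompact : IsCompact C) (hCconv : Convex ℝ C)
    (K : Set (ℝ × EuclideanSpace ℝ (Fin n)))
    (hK : K = {p | ∃ α : ℝ, 0 ≤ α ∧ ∃ x ∈ C, p = (α, α • x)})
    (F : Set (ℝ × EuclideanSpace ℝ (Fin n)))
    (hF : IsFaceOf K F) (hF0 : F ≠ {0}) :
    IsFaceOf C {x ∈ C | (1, x) ∈ F} ∧ setDim {x ∈ C | (1, x) ∈ F} = setDim F - 1 :=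
  caratheodory_stmt9_general C K hK F hF
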